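/- Symplectic paths intertwine the reflections at their endpoints (Theorem 4.2(iii), formula (4.4)): Let (ω,Γ) be a symplectic form with a symplectic connection on ℝ^{2n}, and let (ℋ,s) be an Ether structure for (ω,Γ). Let y : [0,1] → ℝ^{2n} be a smooth path with y(0) = x₀ and y(1) = y₁, and let Φ = Y^1 be the time-one path-transformation along y, i.e. Φ(p) = Y(1) where Y solves dY^i/dt = (1/2) Σ_{j,m} (dy^j/dt)(t) · ∂_{w^m}ℋ_{y(t)}(w)_j|_{w=Y(t)} · Ψ^{mi}(Y(t)) with Y(0) = p (assumed to exist on [0,1] for all p). Then Φ(s_{x₀}(z)) = s_{y₁}(Φ(z)) for all z ∈ ℝ^{2n}. -/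

import Mathlib

open scoped BigOperators
noncomputable section

/-- Points of coordinate space `ℝ^N`. -/
abbrev Pt (N : ℕ) := Fin N → ℝ

/-- Partial derivative `∂f/∂x^i` of a scalar function on `ℝ^N`. -/
noncomputable def pd {N : ℕ} (i : Fin N) (f : Pt N → ℝ) (x : Pt N) : ℝ :=
  fderiv ℝ f x (Pi.single i 1)

/-- The Poisson tensor `Ψ = ω⁻¹`. -/
noncomputable def Psi {N : ℕ} (ω : Pt N → Matrix (Fin N) (Fin N) ℝ) (z : Pt N) :
    Matrix (Fin N) (Fin N) ℝ := (ω z)⁻¹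

/-- The Poisson bracket `{f,g}(z) = Σ ∂_m f Ψ^{mi} ∂_i g`. -/
noncomputable def pb {N : ℕ} (ω : Pt N → Matrix (Fin N) (Fin N) ℝ) (f g : Pt N → ℝ)
    (z : Pt N) : ℝ := ∑ m, ∑ i, pd m f z * Psi ω z m i * pd i g z

/-- A symplectic form on `ℝ^N` in coordinates: a smooth, pointwise antisymmetric and
invertible matrix-valued map satisfying the closedness condition. -/
structure SymplForm (N : ℕ) where
  ω : Pt N → Matrix (Fin N) (Fin N) ℝ
  smooth : ∀ i j, ContDiff ℝ (⊤ : ℕ∞) fun z => ω z i j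
  antisymm : ∀ z i j, ω z i j = - ω z j i
  invertible : ∀ z, IsUnit (ω z).det
  closed : ∀ z i j k,
    pd i (fun w => ω w j k) z + pd j (fun w => ω w k i) z + pd k (fun w => ω w i j) z = 0

/-- A symplectic connection for `S`: smooth Christoffel symbols `Γ x j k l = Γ^j_{kl}(x)`,
symmetric in the lower indices, with `ω` covariantly constant. -/
structure SymplConn (N : ℕ) (S : SymplForm N) where
  Γ : Pt N → Fin N → Fin N → Fin N → ℝ
  smooth : ∀ j k l, ContDiff ℝ (⊤ : ℕ∞) fun z => Γ z j k l
  symm : ∀ z j k l, Γ z j k l = Γ z j l k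
  compat : ∀ z i j k,
    pd k (fun w => S.ω w i j) z - (∑ l, Γ z l i k * S.ω z l j)
      - (∑ l, Γ z l j k * S.ω z i l) = 0

/-- An Ether structure for `(ω, Γ)`: the Ether Hamiltonian `ℋ` (a 1-form in `x` with
values in functions of `z`) and the reflections `s`, satisfying the zero-curvature
equation, the boundary conditions on the diagonal, the reflection (Ether Hamiltonian
system) equation, and the skew-symmetry condition. -/
structure EtherStructure (N : ℕ) (S : SymplForm N) (C : SymplConn N S) where
  H : Pt N → Pt N → Fin N → ℝ
  s : Pt N → Pt N → Pt N
  smoothH : ∀ k, ContDiff ℝ (⊤ : ℕ∞) fun p : Pt N × Pt N => H p.1 p.2 k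
  smoothS : ∀ i, ContDiff ℝ (⊤ : ℕ∞) fun p : Pt N × Pt N => s p.1 p.2 i
  zeroCurv : ∀ x z j k,
    pd j (fun w => H w z k) x - pd k (fun w => H w z j) x
      + pb S.ω (fun w => H x w j) (fun w => H x w k) z = 0
  bc0 : ∀ x k, H x x k = 0
  bc1 : ∀ x k m, pd m (fun w => H x w k) x = 2 * S.ω x k m
  bc2 : ∀ x k l m,
    pd l (fun w => pd m (fun w' => H x w' k) w) x
      = ∑ r, C.Γ x r l m * pd r (fun w => H x w k) x
  reflEq : ∀ x z j i,
    pd j (fun w => s w z i) x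
      = ∑ m, pd m (fun w => H x w j) (s x z) * Psi S.ω (s x z) m i
  reflInit : ∀ z, s z z = z
  skew : ∀ x z k, H x (s x z) k = - H x z k

section Plumbing
variable {N M : ℕ}

theorem clm_eq_sum (L : Pt N →L[ℝ] ℝ) (v : Pt N) :
    L v = ∑ i, v i * L (Pi.single i 1) := by
  have hv : v = ∑ i, v i • (Pi.single i 1 : Pt N) := by
    funext j
    rw [Finset.sum_apply]
    simp [Pi.single_apply]
  conv_lhs => rw [hv]
  rw [map_sum]
  simp [smul_eq_mul]

theorem pd_sum {ι : Type*} (t : Finset ι) (f : ι → Pt N → ℝ) {x : Pt N} (i : Fin N)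
    (h : ∀ j ∈ t, DifferentiableAt ℝ (f j) x) :
    pd i (fun z => ∑ j ∈ t, f j z) x = ∑ j ∈ t, pd i (f j) x := by
  unfold pd
  rw [fderiv_fun_sum h]
  simp

theorem pd_mul {f g : Pt N → ℝ} {x : Pt N} (i : Fin N)
    (hf : DifferentiableAt ℝ f x) (hg : DifferentiableAt ℝ g x) :
    pd i (fun z => f z * g z) x = pd i f x * g x + f x * pd i g x := by
  unfold pd
  rw [fderiv_fun_mul hf hg]
  simp
  ring

theorem pd_neg {f : Pt N → ℝ} {x : Pt N} (i : Fin N) :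
    pd i (fun z => - f z) x = - pd i f x := by
  unfold pd
  rw [fderiv_fun_neg]
  simp

theorem pd_congr {f g : Pt N → ℝ} (h : ∀ z, f z = g z) (i : Fin N) (x : Pt N) :
    pd i f x = pd i g x := by
  have : f = g := funext h
  rw [this]

theorem pd_comp (f : Pt N → ℝ) (hf : ContDiff ℝ (⊤ : ℕ∞) f) (g : Pt M → Pt N)
    (hg : ∀ k, ContDiff ℝ (⊤ : ℕ∞) fun z => g z k) (l : Fin M) (x : Pt M) :
    pd l (fun z => f (g z)) x = ∑ k, pd k f (g x) * pd l (fun z => g z k) x := by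
  have hgd : DifferentiableAt ℝ g x :=
    differentiableAt_pi.2 fun k => ((hg k).differentiable (by simp) x)
  have hfd := (hf.differentiable (by simp) (g x))
  unfold pd
  rw [show (fun z => f (g z)) = f ∘ g from rfl, fderiv_comp x hfd hgd,
    ContinuousLinearMap.comp_apply, clm_eq_sum]
  refine Finset.sum_congr rfl fun k _ => ?_
  rw [mul_comm]
  congr 1
  have : fderiv ℝ g x = ContinuousLinearMap.pi fun k => fderiv ℝ (fun z => g z k) x :=
    fderiv_pi fun k => ((hg k).differentiable (by simp) x)
  rw [this]
  rfl

theorem pd_slice_left (F : Pt N × Pt M → ℝ) (hF : ContDiff ℝ (⊤ : ℕ∞) F) (x : Pt N) (z : Pt M)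
    (i : Fin N) :
    pd i (fun x' => F (x', z)) x = fderiv ℝ F (x, z) (Pi.single i 1, 0) := by
  have h1 : HasFDerivAt (fun x' : Pt N => (x', z))
      (ContinuousLinearMap.inl ℝ (Pt N) (Pt M)) x := hasFDerivAt_prodMk_left x z
  have h2 := (hF.differentiable (by simp) (x, z)).hasFDerivAt
  have h3 : HasFDerivAt (fun x' => F (x', z))
      ((fderiv ℝ F (x, z)).comp (ContinuousLinearMap.inl ℝ (Pt N) (Pt M))) x := h2.comp x h1
  unfold pd
  rw [h3.fderiv]
  rfl

theorem pd_slice_right (F : Pt N × Pt M → ℝ) (hF : ContDiff ℝ (⊤ : ℕ∞) F) (x : Pt N) (z : Pt M)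
    (i : Fin M) :
    pd i (fun z' => F (x, z')) z = fderiv ℝ F (x, z) (0, Pi.single i 1) := by
  have h1 : HasFDerivAt (fun z' : Pt M => (x, z'))
      (ContinuousLinearMap.inr ℝ (Pt N) (Pt M)) z := hasFDerivAt_prodMk_right x z
  have h2 := (hF.differentiable (by simp) (x, z)).hasFDerivAt
  have h3 : HasFDerivAt (fun z' => F (x, z'))
      ((fderiv ℝ F (x, z)).comp (ContinuousLinearMap.inr ℝ (Pt N) (Pt M))) z := h2.comp z h1
  unfold pd
  rw [h3.fderiv]
  rfl

variable {V : Type*} [NormedAddCommGroup V] [NormedSpace ℝ V]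

theorem contDiff_fderiv_apply {f : V → ℝ} (hf : ContDiff ℝ (⊤ : ℕ∞) f) (c : V) :
    ContDiff ℝ (⊤ : ℕ∞) fun y => fderiv ℝ f y c :=
  (hf.fderiv_right (by simp)).clm_apply contDiff_const

theorem fderiv_fderiv_apply {f : V → ℝ} (hf : ContDiff ℝ (⊤ : ℕ∞) f) (x v w : V) :
    fderiv ℝ (fun y => fderiv ℝ f y w) x v = fderiv ℝ (fderiv ℝ f) x v w := by
  have hD : DifferentiableAt ℝ (fderiv ℝ f) x :=
    (hf.fderiv_right (m := (⊤ : ℕ∞)) (by simp)).differentiable (by simp) x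
  rw [fderiv_clm_apply hD (differentiableAt_const w)]
  simp

theorem fderiv_swap {f : V → ℝ} (hf : ContDiff ℝ (⊤ : ℕ∞) f) (x v w : V) :
    fderiv ℝ (fun y => fderiv ℝ f y w) x v = fderiv ℝ (fun y => fderiv ℝ f y v) x w := by
  rw [fderiv_fderiv_apply hf, fderiv_fderiv_apply hf]
  exact second_derivative_symmetric (fun y => ((hf.differentiable (by simp) y).hasFDerivAt))
    ((hf.fderiv_right (m := (⊤ : ℕ∞)) (by simp)).differentiable (by simp) x).hasFDerivAt v w

theorem pd_pd_swap (f : Pt N → ℝ) (hf : ContDiff ℝ (⊤ : ℕ∞) f) (x : Pt N) (a b : Fin N) :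
    pd a (fun v => pd b f v) x = pd b (fun v => pd a f v) x := by
  simp only [pd]
  exact fderiv_swap hf x (Pi.single a 1) (Pi.single b 1)

theorem pd_pd_swap_prod (F : Pt N × Pt M → ℝ) (hF : ContDiff ℝ (⊤ : ℕ∞) F) (x : Pt N) (z : Pt M)
    (j : Fin N) (l : Fin M) :
    pd j (fun x' => pd l (fun z' => F (x', z')) z) x
      = pd l (fun z' => pd j (fun x' => F (x', z')) x) z := by
  have hG : ContDiff ℝ (⊤ : ℕ∞) (fun p => fderiv ℝ F p (0, Pi.single l 1)) :=
    contDiff_fderiv_apply hF _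
  have hG' : ContDiff ℝ (⊤ : ℕ∞) (fun p => fderiv ℝ F p (Pi.single j 1, 0)) :=
    contDiff_fderiv_apply hF _
  calc pd j (fun x' => pd l (fun z' => F (x', z')) z) x
      = pd j (fun x' => fderiv ℝ F (x', z) (0, Pi.single l 1)) x := by
        apply pd_congr; intro x'; exact pd_slice_right F hF x' z l
    _ = fderiv ℝ (fun p => fderiv ℝ F p (0, Pi.single l 1)) (x, z) (Pi.single j 1, 0) :=
        pd_slice_left _ hG x z j
    _ = fderiv ℝ (fun p => fderiv ℝ F p (Pi.single j 1, 0)) (x, z) (0, Pi.single l 1) :=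
        fderiv_swap hF (x, z) _ _
    _ = pd l (fun z' => fderiv ℝ F (x, z') (Pi.single j 1, 0)) z :=
        (pd_slice_right _ hG' x z l).symm
    _ = pd l (fun z' => pd j (fun x' => F (x', z')) x) z := by
        apply pd_congr; intro z'; exact (pd_slice_left F hF x z' j).symm

theorem fderiv_prod_split (F : Pt N × Pt M → ℝ) (hF : ContDiff ℝ (⊤ : ℕ∞) F) (x : Pt N) (z : Pt M)
    (u : Pt N) (v : Pt M) :
    fderiv ℝ F (x, z) (u, v) = (∑ j, u j * pd j (fun x' => F (x', z)) x)
      + ∑ l, v l * pd l (fun z' => F (x, z')) z := by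
  have h1 : ((u, v) : Pt N × Pt M) = (u, 0) + (0, v) := by simp
  rw [h1, map_add]
  congr 1
  · have : fderiv ℝ F (x, z) (u, (0 : Pt M))
        = ((fderiv ℝ F (x, z)).comp (ContinuousLinearMap.inl ℝ (Pt N) (Pt M))) u := rfl
    rw [this, clm_eq_sum]
    refine Finset.sum_congr rfl fun j _ => ?_
    rw [pd_slice_left F hF]
    rfl
  · have : fderiv ℝ F (x, z) ((0 : Pt N), v)
        = ((fderiv ℝ F (x, z)).comp (ContinuousLinearMap.inr ℝ (Pt N) (Pt M))) v := rfl
    rw [this, clm_eq_sum]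
    refine Finset.sum_congr rfl fun l _ => ?_
    rw [pd_slice_right F hF]
    rfl

end Plumbing
section Det
variable {V : Type*} [NormedAddCommGroup V] [NormedSpace ℝ V] {N : ℕ}

theorem contDiff_det (A : V → Matrix (Fin N) (Fin N) ℝ)
    (h : ∀ i j, ContDiff ℝ (⊤ : ℕ∞) fun v => A v i j) :
    ContDiff ℝ (⊤ : ℕ∞) fun v => (A v).det := by
  have : (fun v => (A v).det)
      = fun v => ∑ σ : Equiv.Perm (Fin N), (Equiv.Perm.sign σ : ℝ) * ∏ i, A v (σ i) i := by
    funext v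
    rw [Matrix.det_apply]
    refine Finset.sum_congr rfl fun σ _ => ?_
    simp [Units.smul_def, zsmul_eq_mul]
  rw [this]
  exact ContDiff.sum fun σ _ => contDiff_const.mul (contDiff_prod fun i _ => h _ _)

theorem contDiff_adjugate (A : V → Matrix (Fin N) (Fin N) ℝ)
    (h : ∀ i j, ContDiff ℝ (⊤ : ℕ∞) fun v => A v i j) (i j : Fin N) :
    ContDiff ℝ (⊤ : ℕ∞) fun v => (A v).adjugate i j := by
  have : (fun v => (A v).adjugate i j)
      = fun v => ((A v).updateRow j (Pi.single i 1)).det := by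
    funext v; rw [Matrix.adjugate_apply]
  rw [this]
  exact contDiff_det _ (fun a b => by
    rcases eq_or_ne a j with rfl | hne
    · simp only [Matrix.updateRow_apply, if_pos rfl]; exact contDiff_const
    · simp only [Matrix.updateRow_apply, if_neg hne]
      exact h a b)

theorem contDiff_inv_entry (A : V → Matrix (Fin N) (Fin N) ℝ)
    (h : ∀ i j, ContDiff ℝ (⊤ : ℕ∞) fun v => A v i j)
    (hdet : ∀ v, IsUnit (A v).det) (i j : Fin N) :
    ContDiff ℝ (⊤ : ℕ∞) fun v => (A v)⁻¹ i j := by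
  have : (fun v => (A v)⁻¹ i j)
      = fun v => ((A v).det)⁻¹ * (A v).adjugate i j := by
    funext v
    rw [Matrix.inv_def]
    simp [Ring.inverse_eq_inv']
  rw [this]
  exact ((contDiff_det A h).inv fun v => (hdet v).ne_zero).mul (contDiff_adjugate A h i j)

end Det


theorem sum3_comm23 {α : Type*} [Fintype α] (e : α → α → α → ℝ) :
    ∑ k, ∑ l, ∑ c, e k l c = ∑ k, ∑ c, ∑ l, e k l c :=
  Finset.sum_congr rfl fun _ _ => Finset.sum_comm

theorem sum3_comm13 {α : Type*} [Fintype α] (e : α → α → α → ℝ) :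
    ∑ k, ∑ l, ∑ c, e k l c = ∑ c, ∑ l, ∑ k, e k l c := by
  rw [sum3_comm23]
  rw [Finset.sum_comm]
  exact Finset.sum_congr rfl fun _ _ => Finset.sum_comm

theorem sum_shuffle {N : ℕ} (Ka Kb X : Fin N → ℝ) (D W : Fin N → Fin N → ℝ)
    (P : Fin N → Fin N → Fin N → ℝ) :
    ∑ k, ∑ l, ((∑ c, D k c * Ka c) * W k l * Kb l
          + Ka k * ((∑ c, P k l c * X c) * Kb l)
          + Ka k * W k l * (∑ c, D l c * Kb c))
      = ∑ p, ∑ q, Ka p * Kb q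
          * (∑ c, (D c p * W c q + W p c * D c q + X c * P p q c)) := by
  have lhs : ∑ k, ∑ l, ((∑ c, D k c * Ka c) * W k l * Kb l
          + Ka k * ((∑ c, P k l c * X c) * Kb l)
          + Ka k * W k l * (∑ c, D l c * Kb c))
      = (∑ k, ∑ l, ∑ c, D k c * Ka c * W k l * Kb l)
        + (∑ k, ∑ l, ∑ c, Ka k * P k l c * X c * Kb l)
        + (∑ k, ∑ l, ∑ c, Ka k * W k l * D l c * Kb c) := by
    rw [← Finset.sum_add_distrib, ← Finset.sum_add_distrib]
    refine Finset.sum_congr rfl fun k _ => ?_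
    rw [← Finset.sum_add_distrib, ← Finset.sum_add_distrib]
    refine Finset.sum_congr rfl fun l _ => ?_
    simp only [Finset.sum_mul, Finset.mul_sum, ← Finset.sum_add_distrib]
    refine Finset.sum_congr rfl fun c _ => ?_
    ring
  have rhs : ∑ p, ∑ q, Ka p * Kb q
          * (∑ c, (D c p * W c q + W p c * D c q + X c * P p q c))
      = (∑ p, ∑ q, ∑ c, Ka p * Kb q * (D c p * W c q))
        + (∑ p, ∑ q, ∑ c, Ka p * Kb q * (W p c * D c q))
        + (∑ p, ∑ q, ∑ c, Ka p * Kb q * (X c * P p q c)) := by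
    rw [← Finset.sum_add_distrib, ← Finset.sum_add_distrib]
    refine Finset.sum_congr rfl fun p _ => ?_
    rw [← Finset.sum_add_distrib, ← Finset.sum_add_distrib]
    refine Finset.sum_congr rfl fun q _ => ?_
    simp only [Finset.mul_sum, ← Finset.sum_add_distrib]
    refine Finset.sum_congr rfl fun c _ => ?_
    ring
  rw [lhs, rhs]
  have e1 : ∑ k, ∑ l, ∑ c, D k c * Ka c * W k l * Kb l
      = ∑ p, ∑ q, ∑ c, Ka p * Kb q * (D c p * W c q) := by
    rw [sum3_comm13 (fun k l c => D k c * Ka c * W k l * Kb l)]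
    exact Finset.sum_congr rfl fun p _ => Finset.sum_congr rfl fun q _ =>
      Finset.sum_congr rfl fun c _ => by ring
  have e2 : ∑ k, ∑ l, ∑ c, Ka k * P k l c * X c * Kb l
      = ∑ p, ∑ q, ∑ c, Ka p * Kb q * (X c * P p q c) :=
    Finset.sum_congr rfl fun p _ => Finset.sum_congr rfl fun q _ =>
      Finset.sum_congr rfl fun c _ => by ring
  have e3 : ∑ k, ∑ l, ∑ c, Ka k * W k l * D l c * Kb c
      = ∑ p, ∑ q, ∑ c, Ka p * Kb q * (W p c * D c q) := by
    rw [sum3_comm23 (fun k l c => Ka k * W k l * D l c * Kb c)]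
    exact Finset.sum_congr rfl fun p _ => Finset.sum_congr rfl fun q _ =>
      Finset.sum_congr rfl fun c _ => by ring
  rw [e1, e2, e3]
  ring

namespace EtherProof
variable {N : ℕ} {S : SymplForm N} {C : SymplConn N S} (E : EtherStructure N S C)

/-- The Hamiltonian vector field of `H_x(·)_j` evaluated at `v`, component `i`. -/
def XF (x v : Pt N) (j i : Fin N) : ℝ :=
  ∑ m, pd m (fun w => E.H x w j) v * Psi S.ω v m i

theorem smooth_Psi (m i : Fin N) : ContDiff ℝ (⊤ : ℕ∞) fun v : Pt N => Psi S.ω v m i :=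
  contDiff_inv_entry S.ω S.smooth S.invertible m i

theorem smooth_H_z (x : Pt N) (j : Fin N) : ContDiff ℝ (⊤ : ℕ∞) fun w => E.H x w j :=
  (E.smoothH j).comp (contDiff_prodMk_right x)

theorem smooth_H_x (z : Pt N) (j : Fin N) : ContDiff ℝ (⊤ : ℕ∞) fun x => E.H x z j :=
  (E.smoothH j).comp (contDiff_prodMk_left z)

theorem smooth_s_z (x : Pt N) (i : Fin N) : ContDiff ℝ (⊤ : ℕ∞) fun z => E.s x z i :=
  (E.smoothS i).comp (contDiff_prodMk_right x)

theorem smooth_s_x (z : Pt N) (i : Fin N) : ContDiff ℝ (⊤ : ℕ∞) fun x => E.s x z i :=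
  (E.smoothS i).comp (contDiff_prodMk_left z)

theorem smooth_pdH (j m : Fin N) :
    ContDiff ℝ (⊤ : ℕ∞) fun p : Pt N × Pt N => pd m (fun w => E.H p.1 w j) p.2 := by
  have h : (fun p : Pt N × Pt N => pd m (fun w => E.H p.1 w j) p.2)
      = fun p => fderiv ℝ (fun q : Pt N × Pt N => E.H q.1 q.2 j) p (0, Pi.single m 1) := by
    funext p
    exact pd_slice_right (fun q : Pt N × Pt N => E.H q.1 q.2 j) (E.smoothH j) p.1 p.2 m
  rw [h]
  exact contDiff_fderiv_apply (E.smoothH j) _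

theorem smooth_pdS (i a : Fin N) :
    ContDiff ℝ (⊤ : ℕ∞) fun p : Pt N × Pt N => pd a (fun z => E.s p.1 z i) p.2 := by
  have h : (fun p : Pt N × Pt N => pd a (fun z => E.s p.1 z i) p.2)
      = fun p => fderiv ℝ (fun q : Pt N × Pt N => E.s q.1 q.2 i) p (0, Pi.single a 1) := by
    funext p
    exact pd_slice_right (fun q : Pt N × Pt N => E.s q.1 q.2 i) (E.smoothS i) p.1 p.2 a
  rw [h]
  exact contDiff_fderiv_apply (E.smoothS i) _

theorem smooth_XF_joint (j i : Fin N) :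
    ContDiff ℝ (⊤ : ℕ∞) fun p : Pt N × Pt N => XF E p.1 p.2 j i :=
  ContDiff.sum fun m _ =>
    (smooth_pdH E j m).mul ((smooth_Psi m i).comp contDiff_snd)

theorem smooth_XF_v (x : Pt N) (j i : Fin N) : ContDiff ℝ (⊤ : ℕ∞) fun v => XF E x v j i :=
  (smooth_XF_joint E j i).comp (contDiff_prodMk_right x)

theorem smooth_K_x (w : Pt N) (k a : Fin N) :
    ContDiff ℝ (⊤ : ℕ∞) fun x' => pd a (fun z => E.s x' z k) w :=
  (smooth_pdS E k a).comp (contDiff_prodMk_left w)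

theorem smooth_s_vec_x (w : Pt N) : ContDiff ℝ (⊤ : ℕ∞) fun x' => E.s x' w :=
  contDiff_pi.2 fun c => smooth_s_x E w c

theorem smooth_s_vec_z (x : Pt N) : ContDiff ℝ (⊤ : ℕ∞) fun z => E.s x z :=
  contDiff_pi.2 fun c => smooth_s_z E x c

theorem diffH (x : Pt N) (j : Fin N) (v : Pt N) :
    DifferentiableAt ℝ (fun w => E.H x w j) v :=
  (smooth_H_z E x j).differentiable (by simp) v

theorem diffXF (x : Pt N) (j i : Fin N) (v : Pt N) :
    DifferentiableAt ℝ (fun u => XF E x u j i) v :=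
  (smooth_XF_v E x j i).differentiable (by simp) v

theorem diffOmega (a b : Fin N) (v : Pt N) :
    DifferentiableAt ℝ (fun u => S.ω u a b) v :=
  (S.smooth a b).differentiable (by simp) v

theorem sum_single_mul (T : Fin N → ℝ) (l : Fin N) :
    ∑ j, (Pi.single l 1 : Pt N) j * T j = T l := by
  simp [Pi.single_apply]

/-- `Σ_c X^c ω_{cb} = ∂_b H` (i.e. `i_X ω = dH` with these conventions). -/
theorem sumXomega (x v : Pt N) (j b : Fin N) :
    ∑ c, XF E x v j c * S.ω v c b = pd b (fun w => E.H x w j) v := by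
  unfold XF
  have h1 : ∀ m, ∑ c, Psi S.ω v m c * S.ω v c b = (1 : Matrix (Fin N) (Fin N) ℝ) m b := by
    intro m
    rw [← Matrix.mul_apply]
    rw [show Psi S.ω v * S.ω v = 1 from Matrix.nonsing_inv_mul _ (S.invertible v)]
  calc ∑ c, (∑ m, pd m (fun w => E.H x w j) v * Psi S.ω v m c) * S.ω v c b
      = ∑ m, pd m (fun w => E.H x w j) v * ∑ c, Psi S.ω v m c * S.ω v c b := by
        simp only [Finset.sum_mul]
        rw [Finset.sum_comm]
        simp only [Finset.mul_sum, mul_assoc]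
    _ = ∑ m, pd m (fun w => E.H x w j) v * (1 : Matrix (Fin N) (Fin N) ℝ) m b := by
        simp only [h1]
    _ = pd b (fun w => E.H x w j) v := by
        simp [Matrix.one_apply]

theorem omegaX (x v : Pt N) (j a : Fin N) :
    ∑ c, S.ω v a c * XF E x v j c = - pd a (fun w => E.H x w j) v := by
  have : ∀ c, S.ω v a c * XF E x v j c = -(XF E x v j c * S.ω v c a) := by
    intro c
    rw [S.antisymm v a c]
    ring
  rw [Finset.sum_congr rfl fun c _ => this c, Finset.sum_neg_distrib,
    sumXomega E x v j a]

/-- The Lie derivative of `ω` along the Hamiltonian field `X` vanishes. -/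
theorem lie_omega (x v : Pt N) (j a b : Fin N) :
    ∑ c, (pd a (fun u => XF E x u j c) v * S.ω v c b
        + S.ω v a c * pd b (fun u => XF E x u j c) v
        + XF E x v j c * pd c (fun u => S.ω u a b) v) = 0 := by
  set h : Pt N → ℝ := fun w => E.H x w j with hh
  -- differentiate i_X ω = dH in direction a
  have f1 : ∑ c, (pd a (fun u => XF E x u j c) v * S.ω v c b
      + XF E x v j c * pd a (fun u => S.ω u c b) v) = pd a (fun u => pd b h u) v := by
    have e2 : pd a (fun u => ∑ c, XF E x u j c * S.ω u c b) v
        = pd a (fun u => pd b h u) v :=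
      pd_congr (fun u => sumXomega E x u j b) a v
    rw [← e2, pd_sum _ _ a (fun c _ => (diffXF E x j c v).fun_mul (diffOmega c b v))]
    exact Finset.sum_congr rfl fun c _ => (pd_mul a (diffXF E x j c v) (diffOmega c b v)).symm
  -- differentiate ω(a,X) = -dH in direction b
  have f2 : ∑ c, (pd b (fun u => S.ω u a c) v * XF E x v j c
      + S.ω v a c * pd b (fun u => XF E x u j c) v) = - pd b (fun u => pd a h u) v := by
    have e2 : pd b (fun u => ∑ c, S.ω u a c * XF E x u j c) v
        = pd b (fun u => - pd a h u) v :=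
      pd_congr (fun u => omegaX E x u j a) b v
    rw [show (- pd b (fun u => pd a h u) v)
        = pd b (fun u => - pd a h u) v from (pd_neg b).symm, ← e2,
      pd_sum _ _ b (fun c _ => (diffOmega a c v).fun_mul (diffXF E x j c v))]
    exact Finset.sum_congr rfl fun c _ => (pd_mul b (diffOmega a c v) (diffXF E x j c v)).symm
  -- Schwarz for h
  have f3 : pd a (fun u => pd b h u) v = pd b (fun u => pd a h u) v :=
    pd_pd_swap h (smooth_H_z E x j) v a b
  -- closedness rearranged
  have f4 : ∀ c, pd a (fun u => S.ω u c b) v + pd b (fun u => S.ω u a c) v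
      = pd c (fun u => S.ω u a b) v := by
    intro c
    have hcl := S.closed v a b c
    have h1 : pd a (fun u => S.ω u c b) v = - pd a (fun u => S.ω u b c) v := by
      rw [show (fun u => S.ω u c b) = fun u => - S.ω u b c from
        funext fun u => S.antisymm u c b, pd_neg]
    have h2 : pd b (fun u => S.ω u a c) v = - pd b (fun u => S.ω u c a) v := by
      rw [show (fun u => S.ω u a c) = fun u => - S.ω u c a from
        funext fun u => S.antisymm u a c, pd_neg]
    rw [h1, h2]
    linarith
  have f5 : ∑ c, (XF E x v j c * pd a (fun u => S.ω u c b) v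
      + pd b (fun u => S.ω u a c) v * XF E x v j c)
      = ∑ c, XF E x v j c * pd c (fun u => S.ω u a b) v := by
    refine Finset.sum_congr rfl fun c _ => ?_
    rw [← f4 c]
    ring
  have expand : ∑ c, (pd a (fun u => XF E x u j c) v * S.ω v c b
        + S.ω v a c * pd b (fun u => XF E x u j c) v
        + XF E x v j c * pd c (fun u => S.ω u a b) v)
      = (∑ c, (pd a (fun u => XF E x u j c) v * S.ω v c b
          + XF E x v j c * pd a (fun u => S.ω u c b) v))
        + (∑ c, (pd b (fun u => S.ω u a c) v * XF E x v j c
          + S.ω v a c * pd b (fun u => XF E x u j c) v))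
        - (∑ c, (XF E x v j c * pd a (fun u => S.ω u c b) v
          + pd b (fun u => S.ω u a c) v * XF E x v j c))
        + (∑ c, XF E x v j c * pd c (fun u => S.ω u a b) v) := by
    rw [← Finset.sum_add_distrib, ← Finset.sum_sub_distrib, ← Finset.sum_add_distrib]
    exact Finset.sum_congr rfl fun c _ => by ring
  rw [expand, f1, f2, f3, f5]
  ring

/-- `reflEq` rewritten with `XF`. -/
theorem reflEq' (x z : Pt N) (j i : Fin N) :
    pd j (fun w => E.s w z i) x = XF E x (E.s x z) j i :=
  E.reflEq x z j i

/-- `X^z_j(z)^i = 2 δ_{ji}`. -/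
theorem XF_diag (z : Pt N) (j i : Fin N) :
    XF E z z j i = 2 * (if j = i then (1:ℝ) else 0) := by
  unfold XF
  have h1 : ∀ m, pd m (fun w => E.H z w j) z * Psi S.ω z m i
      = 2 * (S.ω z j m * Psi S.ω z m i) := by
    intro m
    rw [E.bc1 z j m]
    ring
  rw [Finset.sum_congr rfl fun m _ => h1 m, ← Finset.mul_sum]
  have h2 : ∑ m, S.ω z j m * Psi S.ω z m i = (1 : Matrix (Fin N) (Fin N) ℝ) j i := by
    rw [← Matrix.mul_apply,
      show S.ω z * Psi S.ω z = 1 from Matrix.mul_nonsing_inv _ (S.invertible z)]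
  rw [h2, Matrix.one_apply]

/-- The diagonal value of the z-differential of the reflection: `d_z s|_{x=z} = -1`. -/
theorem K_diag (z : Pt N) (i l : Fin N) :
    pd l (fun z' => E.s z z' i) z = - (if i = l then (1:ℝ) else 0) := by
  have hdiag : HasFDerivAt (fun z' : Pt N => (z', z'))
      ((ContinuousLinearMap.id ℝ (Pt N)).prod (ContinuousLinearMap.id ℝ (Pt N))) z :=
    (hasFDerivAt_id z).prodMk (hasFDerivAt_id z)
  have hF := ((E.smoothS i).differentiable (by simp) (z, z)).hasFDerivAt
  have hcomp0 : HasFDerivAt ((fun p : Pt N × Pt N => E.s p.1 p.2 i) ∘ (fun z' => (z', z')))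
      ((fderiv ℝ (fun p : Pt N × Pt N => E.s p.1 p.2 i) (z, z)).comp
        ((ContinuousLinearMap.id ℝ (Pt N)).prod (ContinuousLinearMap.id ℝ (Pt N)))) z :=
    HasFDerivAt.comp (f := fun z' : Pt N => (z', z')) (x := z) hF hdiag
  have hcomp : HasFDerivAt (fun z' => E.s z' z' i)
      ((fderiv ℝ (fun p : Pt N × Pt N => E.s p.1 p.2 i) (z, z)).comp
        ((ContinuousLinearMap.id ℝ (Pt N)).prod (ContinuousLinearMap.id ℝ (Pt N)))) z := hcomp0
  have hid : (fun z' => E.s z' z' i) = fun z' => z' i := by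
    funext z'
    rw [E.reflInit z']
  have hproj : HasFDerivAt (fun z' : Pt N => z' i)
      (ContinuousLinearMap.proj (R := ℝ) (φ := fun _ : Fin N => ℝ) i) z :=
    hasFDerivAt_apply i z
  rw [hid] at hcomp
  have heq := hcomp.unique hproj
  have happ := congrArg (fun (L : Pt N →L[ℝ] ℝ) => L (Pi.single l 1)) heq
  simp only [ContinuousLinearMap.comp_apply, ContinuousLinearMap.prod_apply,
    ContinuousLinearMap.id_apply, ContinuousLinearMap.proj_apply] at happ
  -- happ : fderiv F (z,z) (e_l, e_l) = (e_l) i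
  rw [fderiv_prod_split (fun p : Pt N × Pt N => E.s p.1 p.2 i) (E.smoothS i) z z] at happ
  rw [sum_single_mul, sum_single_mul] at happ
  have hx : pd l (fun x' => E.s x' z i) z = 2 * (if l = i then (1:ℝ) else 0) := by
    rw [reflEq' E z z l i, E.reflInit z, XF_diag E z l i]
  rw [hx] at happ
  have hsingle : (Pi.single l 1 : Pt N) i = (if i = l then (1:ℝ) else 0) := by
    simp [Pi.single_apply]
  rw [hsingle] at happ
  by_cases h : i = l
  · subst h; simp at happ ⊢; linarith
  · have h' : ¬ (l = i) := fun hc => h hc.symm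
    simp [h, h'] at happ ⊢
    linarith

/-- x-derivative of the z-differential of s (mixed partial swap + chain rule). -/
theorem pdK_x (x w : Pt N) (j i l : Fin N) :
    pd j (fun x' => pd l (fun z => E.s x' z i) w) x
      = ∑ c, pd c (fun v => XF E x v j i) (E.s x w) * pd l (fun z => E.s x z c) w := by
  rw [pd_pd_swap_prod (fun p : Pt N × Pt N => E.s p.1 p.2 i) (E.smoothS i) x w j l]
  have h : (fun z => pd j (fun x' => E.s x' z i) x) = fun z => XF E x (E.s x z) j i := by
    funext z
    exact reflEq' E x z j i
  rw [h]
  exact pd_comp (fun v => XF E x v j i) (smooth_XF_v E x j i) (fun z => E.s x z)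
    (fun c => smooth_s_z E x c) l w

/-- x-derivative of `ω ∘ s`. -/
theorem pd_omega_s_x (x w : Pt N) (j a b : Fin N) :
    pd j (fun x' => S.ω (E.s x' w) a b) x
      = ∑ c, pd c (fun u => S.ω u a b) (E.s x w) * XF E x (E.s x w) j c := by
  rw [pd_comp (fun u => S.ω u a b) (S.smooth a b) (fun x' => E.s x' w)
    (fun c => smooth_s_x E w c) j x]
  refine Finset.sum_congr rfl fun c _ => ?_
  rw [reflEq' E x w j c]

/-- differentiating the skew-symmetry relation in z. -/
theorem skew_diff (x w : Pt N) (j l : Fin N) :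
    ∑ k, pd k (fun u => E.H x u j) (E.s x w) * pd l (fun z => E.s x z k) w
      = - pd l (fun u => E.H x u j) w := by
  have h := pd_comp (fun u => E.H x u j) (smooth_H_z E x j) (fun z => E.s x z)
    (fun c => smooth_s_z E x c) l w
  rw [← h]
  rw [show (fun z => E.H x (E.s x z) j) = fun z => - E.H x z j from
    funext fun z => E.skew x z j, pd_neg]

theorem pdQ_zero (x w : Pt N) (a b j : Fin N) :
    pd j (fun x' => ∑ k, ∑ l, pd a (fun z => E.s x' z k) w * S.ω (E.s x' w) k l
      * pd b (fun z => E.s x' z l) w) x = 0 := by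
  have dK : ∀ (c e : Fin N) (x' : Pt N),
      DifferentiableAt ℝ (fun x'' => pd e (fun z => E.s x'' z c) w) x' :=
    fun c e x' => (smooth_K_x E w c e).differentiable (by simp) x'
  have dW : ∀ (k l : Fin N) (x' : Pt N),
      DifferentiableAt ℝ (fun x'' => S.ω (E.s x'' w) k l) x' :=
    fun k l x' => ((S.smooth k l).comp (smooth_s_vec_x E w)).differentiable (by simp) x'
  have step1 : pd j (fun x' => ∑ k, ∑ l, pd a (fun z => E.s x' z k) w * S.ω (E.s x' w) k l
      * pd b (fun z => E.s x' z l) w) x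
      = ∑ k, ∑ l, ((∑ c, pd c (fun v => XF E x v j k) (E.s x w) * pd a (fun z => E.s x z c) w)
            * S.ω (E.s x w) k l * pd b (fun z => E.s x z l) w
          + pd a (fun z => E.s x z k) w
            * ((∑ c, pd c (fun u => S.ω u k l) (E.s x w) * XF E x (E.s x w) j c)
              * pd b (fun z => E.s x z l) w)
          + pd a (fun z => E.s x z k) w * S.ω (E.s x w) k l
            * (∑ c, pd c (fun v => XF E x v j l) (E.s x w) * pd b (fun z => E.s x z c) w)) := by
    rw [pd_sum _ _ j (fun k _ => DifferentiableAt.fun_sum fun l _ =>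
      ((dK k a x).fun_mul (dW k l x)).fun_mul (dK l b x))]
    refine Finset.sum_congr rfl fun k _ => ?_
    rw [pd_sum _ _ j (fun l _ => ((dK k a x).fun_mul (dW k l x)).fun_mul (dK l b x))]
    refine Finset.sum_congr rfl fun l _ => ?_
    rw [pd_mul j ((dK k a x).fun_mul (dW k l x)) (dK l b x),
      pd_mul j (dK k a x) (dW k l x)]
    rw [pdK_x E x w j k a, pd_omega_s_x E x w j k l, pdK_x E x w j l b]
    ring
  rw [step1]
  rw [sum_shuffle (fun c => pd a (fun z => E.s x z c) w) (fun c => pd b (fun z => E.s x z c) w)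
    (fun c => XF E x (E.s x w) j c)
    (fun k c => pd c (fun v => XF E x v j k) (E.s x w))
    (fun k l => S.ω (E.s x w) k l)
    (fun k l c => pd c (fun u => S.ω u k l) (E.s x w))]
  have hz : ∀ p q : Fin N, (∑ c, (pd p (fun v => XF E x v j c) (E.s x w) * S.ω (E.s x w) c q
      + S.ω (E.s x w) p c * pd q (fun v => XF E x v j c) (E.s x w)
      + XF E x (E.s x w) j c * pd c (fun u => S.ω u p q) (E.s x w))) = 0 :=
    fun p q => lie_omega E x (E.s x w) j p q
  refine Finset.sum_eq_zero fun p _ => Finset.sum_eq_zero fun q _ => ?_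
  rw [hz p q, mul_zero]

/-- The reflections are symplectic: `(d_z s)ᵀ ω(s(w)) (d_z s) = ω(w)`. -/
theorem K_symplectic (x w : Pt N) (a b : Fin N) :
    ∑ k, ∑ l, pd a (fun z => E.s x z k) w * S.ω (E.s x w) k l * pd b (fun z => E.s x z l) w
      = S.ω w a b := by
  have hsm : Differentiable ℝ (fun x' => ∑ k, ∑ l, pd a (fun z => E.s x' z k) w
      * S.ω (E.s x' w) k l * pd b (fun z => E.s x' z l) w) :=
    (ContDiff.sum fun k _ => ContDiff.sum fun l _ =>
      (((smooth_K_x E w k a).mul ((S.smooth k l).comp (smooth_s_vec_x E w))).mul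
        (smooth_K_x E w l b))).differentiable (by simp)
  have hzero : ∀ x', fderiv ℝ (fun x' => ∑ k, ∑ l, pd a (fun z => E.s x' z k) w
      * S.ω (E.s x' w) k l * pd b (fun z => E.s x' z l) w) x' = 0 := by
    intro x'
    apply ContinuousLinearMap.ext
    intro v
    rw [clm_eq_sum]
    have : ∀ i : Fin N, fderiv ℝ (fun x' => ∑ k, ∑ l, pd a (fun z => E.s x' z k) w
        * S.ω (E.s x' w) k l * pd b (fun z => E.s x' z l) w) x' (Pi.single i 1) = 0 :=
      fun i => pdQ_zero E x' w a b i
    simp [this]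
  have hconst := is_const_of_fderiv_eq_zero hsm hzero x w
  rw [hconst]
  have hKd : ∀ (k e : Fin N), pd e (fun z => E.s w z k) w = - (if k = e then (1:ℝ) else 0) :=
    fun k e => K_diag E w k e
  simp only [hKd, E.reflInit]
  rw [Finset.sum_eq_single a]
  · rw [Finset.sum_eq_single b] <;> simp +contextual
  · intro k _ hk
    simp [hk]
  · simp

/-- Key lemma: the z-differential of the reflection maps the Hamiltonian field to
minus the Hamiltonian field at the reflected point. -/
theorem K_intertwine (x w : Pt N) (j i : Fin N) :
    ∑ l, pd l (fun z => E.s x z i) w * XF E x w j l = - XF E x (E.s x w) j i := by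
  classical
  set Km : Matrix (Fin N) (Fin N) ℝ := Matrix.of fun k l => pd l (fun z => E.s x z k) w with hKm
  set A : Matrix (Fin N) (Fin N) ℝ := S.ω w with hA
  set B : Matrix (Fin N) (Fin N) ℝ := S.ω (E.s x w) with hB
  set g : Pt N := fun k => pd k (fun u => E.H x u j) (E.s x w) with hg
  set γ : Pt N := fun l => pd l (fun u => E.H x u j) w with hγ
  have hKBK : Km.transpose * B * Km = A := by
    ext a b
    rw [Matrix.mul_apply]
    have : ∀ l, (Km.transpose * B) a l = ∑ k, Km k a * B k l := by
      intro l
      rw [Matrix.mul_apply]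
      exact Finset.sum_congr rfl fun k _ => rfl
    calc ∑ l, (Km.transpose * B) a l * Km l b = ∑ l, (∑ k, Km k a * B k l) * Km l b := by
          exact Finset.sum_congr rfl fun l _ => by rw [this l]
      _ = ∑ l, ∑ k, Km k a * B k l * Km l b := by
          exact Finset.sum_congr rfl fun l _ => Finset.sum_mul _ _ _
      _ = ∑ k, ∑ l, Km k a * B k l * Km l b := Finset.sum_comm
      _ = A a b := K_symplectic E x w a b
  have hgK : Matrix.vecMul g Km = -γ := by
    funext l
    show ∑ k, g k * Km k l = -γ l
    exact skew_diff E x w j l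
  have hdetA : IsUnit A.det := S.invertible w
  have hdetB : IsUnit B.det := S.invertible (E.s x w)
  have hdetK : IsUnit Km.det := by
    have hd : Km.det * B.det * Km.det = A.det := by
      rw [← hKBK, Matrix.det_mul, Matrix.det_mul, Matrix.det_transpose]
    rw [isUnit_iff_ne_zero]
    intro h0
    exact hdetA.ne_zero (by rw [← hd, h0]; ring)
  have hBinv : B⁻¹ = Km * A⁻¹ * Km.transpose := by
    have h1 : A⁻¹ = Km⁻¹ * B⁻¹ * Km.transpose⁻¹ := by
      rw [← hKBK, Matrix.mul_inv_rev, Matrix.mul_inv_rev]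
      rw [Matrix.mul_assoc]
    rw [h1]
    have hKdT : IsUnit Km.transpose.det := by rwa [Matrix.det_transpose]
    rw [← Matrix.mul_assoc, ← Matrix.mul_assoc, Matrix.mul_nonsing_inv _ hdetK,
      Matrix.one_mul, Matrix.mul_assoc, Matrix.nonsing_inv_mul _ hKdT, Matrix.mul_one]
  have hXw : (fun l => XF E x w j l) = Matrix.vecMul γ A⁻¹ := by
    funext l
    show XF E x w j l = ∑ m, γ m * A⁻¹ m l
    unfold XF
    exact Finset.sum_congr rfl fun m _ => rfl
  have hXs : (fun c => XF E x (E.s x w) j c) = Matrix.vecMul g B⁻¹ := by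
    funext c
    show XF E x (E.s x w) j c = ∑ m, g m * B⁻¹ m c
    unfold XF
    exact Finset.sum_congr rfl fun m _ => rfl
  have key : Matrix.vecMul g B⁻¹ = - Km.mulVec (Matrix.vecMul γ A⁻¹) := by
    rw [hBinv, ← Matrix.vecMul_vecMul, ← Matrix.vecMul_vecMul, hgK, Matrix.neg_vecMul,
      Matrix.neg_vecMul, Matrix.vecMul_transpose]
  have goal1 : ∑ l, pd l (fun z => E.s x z i) w * XF E x w j l
      = Km.mulVec (Matrix.vecMul γ A⁻¹) i := by
    rw [← hXw]
    show _ = ∑ l, Km i l * XF E x w j l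
    exact Finset.sum_congr rfl fun l _ => rfl
  rw [goal1, show XF E x (E.s x w) j i = Matrix.vecMul g B⁻¹ i from congrFun hXs i,
    congrFun key i]
  simp

section ODE
variable (y : ℝ → Pt N)

/-- The (clamped-time) right-hand side of the path-transformation ODE. -/
def Phi (t : ℝ) (v : Pt N) : Pt N :=
  fun i => (1/2) * ∑ j, deriv (fun τ => y τ j) t * XF E (y t) v j i

theorem smooth_deriv_coord (hy : ContDiff ℝ (⊤ : ℕ∞) y) (j : Fin N) :
    ContDiff ℝ (⊤ : ℕ∞) fun t => deriv (fun τ => y τ j) t := by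
  have h : (fun t => deriv (fun τ => y τ j) t)
      = fun t => fderiv ℝ (fun τ => y τ j) t 1 := by
    funext t
    rw [fderiv_apply_one_eq_deriv]
  rw [h]
  exact contDiff_fderiv_apply (contDiff_pi.1 hy j) 1

theorem smooth_Phi (hy : ContDiff ℝ (⊤ : ℕ∞) y) :
    ContDiff ℝ (⊤ : ℕ∞) fun p : ℝ × Pt N => Phi E y p.1 p.2 := by
  apply contDiff_pi.2
  intro i
  apply ContDiff.mul contDiff_const
  apply ContDiff.sum
  intro j _
  exact ((smooth_deriv_coord y hy j).comp contDiff_fst).mul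
    ((smooth_XF_joint E j i).comp (((contDiff_pi.2 fun k =>
      (contDiff_pi.1 hy k).comp contDiff_fst)).prodMk contDiff_snd))

theorem lipschitz_Phi (hy : ContDiff ℝ (⊤ : ℕ∞) y) (R : ℝ) :
    ∃ Kc : NNReal, ∀ t ∈ Set.Icc (0:ℝ) 1,
      LipschitzOnWith Kc (fun v => Phi E y t v) (Metric.closedBall 0 R) := by
  classical
  have hΦ := smooth_Phi E y hy
  have hcont : Continuous fun p : ℝ × Pt N => fderiv ℝ (fun q : ℝ × Pt N => Phi E y q.1 q.2) p :=
    hΦ.continuous_fderiv (by simp)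
  have hK : IsCompact ((Set.Icc (0:ℝ) 1) ×ˢ Metric.closedBall (0 : Pt N) R) :=
    isCompact_Icc.prod (isCompact_closedBall 0 R)
  obtain ⟨Cb, hCb⟩ := hK.exists_bound_of_continuousOn hcont.continuousOn
  refine ⟨⟨max Cb 0, le_max_right _ _⟩, fun t ht => ?_⟩
  have hpart : ContDiff ℝ (⊤ : ℕ∞) (fun v => Phi E y t v) :=
    (contDiff_pi.2 fun i => (contDiff_pi.1 hΦ i).comp (contDiff_prodMk_right t))
  apply Convex.lipschitzOnWith_of_nnnorm_fderiv_le (𝕜 := ℝ)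
    (fun v _ => (hpart.differentiable (by simp) v)) ?_ (convex_closedBall 0 R)
  intro v hv
  have hfd : fderiv ℝ (fun v => Phi E y t v) v
      = (fderiv ℝ (fun q : ℝ × Pt N => Phi E y q.1 q.2) (t, v)).comp
        (ContinuousLinearMap.inr ℝ ℝ (Pt N)) := by
    have h1 : HasFDerivAt (fun v' : Pt N => ((t, v') : ℝ × Pt N))
        (ContinuousLinearMap.inr ℝ ℝ (Pt N)) v := hasFDerivAt_prodMk_right t v
    have h2 := ((hΦ.differentiable (by simp)) (t, v)).hasFDerivAt
    have h3 : HasFDerivAt (fun v' : Pt N => Phi E y t v')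
        ((fderiv ℝ (fun q : ℝ × Pt N => Phi E y q.1 q.2) (t, v)).comp
          (ContinuousLinearMap.inr ℝ ℝ (Pt N))) v := h2.comp v h1
    exact h3.fderiv
  refine NNReal.coe_le_coe.1 ?_
  rw [coe_nnnorm, hfd]
  have hb := hCb (t, v) (Set.mk_mem_prod ht hv)
  calc ‖(fderiv ℝ (fun q : ℝ × Pt N => Phi E y q.1 q.2) (t, v)).comp
        (ContinuousLinearMap.inr ℝ ℝ (Pt N))‖
      ≤ ‖fderiv ℝ (fun q : ℝ × Pt N => Phi E y q.1 q.2) (t, v)‖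
        * ‖ContinuousLinearMap.inr ℝ ℝ (Pt N)‖ := ContinuousLinearMap.opNorm_comp_le _ _
    _ ≤ max Cb 0 * 1 := by
        apply mul_le_mul (le_trans hb (le_max_left _ _)) ?_ (norm_nonneg _)
          (le_max_right _ _)
        apply ContinuousLinearMap.opNorm_le_bound _ zero_le_one
        intro u
        rw [one_mul]
        show ‖((0 : ℝ), u)‖ ≤ ‖u‖
        rw [Prod.norm_def]
        simp
    _ = ((⟨max Cb 0, le_max_right _ _⟩ : NNReal) : ℝ) := by simp

/-- Derivative of the reflected trajectory. -/
theorem hasDerivAt_reflected (hy : ContDiff ℝ (⊤ : ℕ∞) y) (c : ℝ → Pt N) (t : ℝ)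
    (hc : ∀ k, HasDerivAt (fun τ => c τ k)
      ((1/2) * ∑ j, deriv (fun τ => y τ j) t * XF E (y t) (c t) j k) t) (i : Fin N) :
    HasDerivAt (fun τ => E.s (y τ) (c τ) i)
      ((1/2) * ∑ j, deriv (fun τ => y τ j) t * XF E (y t) (E.s (y t) (c t)) j i) t := by
  have hyd : ∀ j, HasDerivAt (fun τ => y τ j) (deriv (fun τ => y τ j) t) t := fun j =>
    ((contDiff_pi.1 hy j).differentiable (by simp) t).hasDerivAt
  set yd : Pt N := fun j => deriv (fun τ => y τ j) t with hyddef
  set cd : Pt N := fun k => (1/2) * ∑ j, yd j * XF E (y t) (c t) j k with hcddef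
  have hcurve : HasDerivAt (fun τ => ((y τ, c τ) : Pt N × Pt N)) ((yd, cd)) t :=
    (hasDerivAt_pi.2 hyd).prodMk (hasDerivAt_pi.2 hc)
  have hF := ((E.smoothS i).differentiable (by simp) ((y t), (c t))).hasFDerivAt
  have hcomp : HasDerivAt (fun τ => E.s (y τ) (c τ) i)
      (fderiv ℝ (fun p : Pt N × Pt N => E.s p.1 p.2 i) (y t, c t) (yd, cd)) t :=
    HasFDerivAt.comp_hasDerivAt (f := fun τ => ((y τ, c τ) : Pt N × Pt N)) t hF hcurve
  have hval : fderiv ℝ (fun p : Pt N × Pt N => E.s p.1 p.2 i) (y t, c t) (yd, cd)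
      = (1/2) * ∑ j, yd j * XF E (y t) (E.s (y t) (c t)) j i := by
    rw [fderiv_prod_split (fun p : Pt N × Pt N => E.s p.1 p.2 i) (E.smoothS i)
      (y t) (c t) yd cd]
    have h1 : ∑ j, yd j * pd j (fun x' => E.s x' (c t) i) (y t)
        = ∑ j, yd j * XF E (y t) (E.s (y t) (c t)) j i :=
      Finset.sum_congr rfl fun j _ => by rw [reflEq' E (y t) (c t) j i]
    have hB : ∑ l, cd l * pd l (fun z' => E.s (y t) z' i) (c t)
        = (1/2) * ∑ j, yd j * (- XF E (y t) (E.s (y t) (c t)) j i) := by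
      have step : ∀ l, cd l * pd l (fun z' => E.s (y t) z' i) (c t)
          = (1/2) * ∑ j, yd j * (pd l (fun z' => E.s (y t) z' i) (c t)
            * XF E (y t) (c t) j l) := by
        intro l
        rw [hcddef]
        simp only [Finset.sum_mul, Finset.mul_sum]
        exact Finset.sum_congr rfl fun j _ => by ring
      rw [Finset.sum_congr rfl fun l _ => step l, ← Finset.mul_sum]
      congr 1
      rw [Finset.sum_comm]
      refine Finset.sum_congr rfl fun j _ => ?_
      rw [← Finset.mul_sum]
      congr 1
      exact K_intertwine E (y t) (c t) j i
    rw [h1, hB]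
    simp only [mul_neg, Finset.sum_neg_distrib]
    ring
  rw [← hval]
  exact hcomp

end ODE

end EtherProof

/-- Theorem 4.2(iii), formula (4.4): symplectic paths intertwine the reflections at
their endpoints: if `Φ = Y¹` is the time-one path-transformation along a path `y` from
`x₀ = y(0)` to `y₁ = y(1)`, then `Φ ∘ s_{x₀} = s_{y₁} ∘ Φ`. -/
theorem symplectic_path_commutes_with_reflections
    (n : ℕ) (S : SymplForm (2*n)) (C : SymplConn (2*n) S) (E : EtherStructure (2*n) S C)
    (y : ℝ → Pt (2*n)) (hy : ContDiff ℝ (⊤ : ℕ∞) y)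
    (Y : ℝ → Pt (2*n) → Pt (2*n))
    (hY0 : ∀ p, Y 0 p = p)
    (hYode : ∀ t ∈ Set.Icc (0:ℝ) 1, ∀ p i,
      HasDerivAt (fun τ => Y τ p i)
        ((1/2) * ∑ j, ∑ m, deriv (fun τ => y τ j) t
          * pd m (fun w => E.H (y t) w j) (Y t p) * Psi S.ω (Y t p) m i) t) :
    ∀ z : Pt (2*n), Y 1 (E.s (y 0) z) = E.s (y 1) (Y 1 z) := by
  intro z
  classical
  set f : ℝ → Pt (2*n) := fun t => Y t (E.s (y 0) z) with hfdef
  set g : ℝ → Pt (2*n) := fun t => E.s (y t) (Y t z) with hgdef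
  have hval : ∀ (t : ℝ) (v : Pt (2*n)) (i : Fin (2*n)),
      ((1:ℝ)/2) * ∑ j, ∑ m, deriv (fun τ => y τ j) t
        * pd m (fun w => E.H (y t) w j) v * Psi S.ω v m i
      = EtherProof.Phi E y t v i := by
    intro t v i
    unfold EtherProof.Phi EtherProof.XF
    congr 1
    refine Finset.sum_congr rfl fun j _ => ?_
    rw [Finset.mul_sum]
    exact Finset.sum_congr rfl fun m _ => by ring
  have hfd : ∀ t ∈ Set.Icc (0:ℝ) 1, ∀ p,
      HasDerivAt (fun τ => Y τ p) (EtherProof.Phi E y t (Y t p)) t := by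
    intro t ht p
    apply hasDerivAt_pi.2
    intro i
    have h := hYode t ht p i
    rwa [hval t (Y t p) i] at h
  have hgd : ∀ t ∈ Set.Icc (0:ℝ) 1,
      HasDerivAt g (EtherProof.Phi E y t (g t)) t := by
    intro t ht
    apply hasDerivAt_pi.2
    intro i
    exact EtherProof.hasDerivAt_reflected E y hy (fun τ => Y τ z) t
      (fun k => by
        have h := hYode t ht z k
        rw [hval t (Y t z) k] at h
        exact h) i
  have hfc : ContinuousOn f (Set.Icc 0 1) := fun t ht =>
    ((hfd t ht (E.s (y 0) z)).continuousAt).continuousWithinAt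
  have hYzc : ContinuousOn (fun t => Y t z) (Set.Icc 0 1) := fun t ht =>
    ((hfd t ht z).continuousAt).continuousWithinAt
  have hgc : ContinuousOn g (Set.Icc 0 1) := by
    apply continuousOn_pi.2
    intro i
    exact ((E.smoothS i).continuous).comp_continuousOn
      ((hy.continuous.continuousOn).prodMk hYzc)
  obtain ⟨R1, hR1⟩ := ((isCompact_Icc.image_of_continuousOn hfc).isBounded).subset_closedBall 0
  obtain ⟨R2, hR2⟩ := ((isCompact_Icc.image_of_continuousOn hgc).isBounded).subset_closedBall 0
  set R : ℝ := max R1 R2 with hRdef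
  have hfin : ∀ t ∈ Set.Ico (0:ℝ) 1, f t ∈ Metric.closedBall (0 : Pt (2*n)) R := fun t ht =>
    Metric.closedBall_subset_closedBall (le_max_left _ _)
      (hR1 (Set.mem_image_of_mem f (Set.Ico_subset_Icc_self ht)))
  have hgin : ∀ t ∈ Set.Ico (0:ℝ) 1, g t ∈ Metric.closedBall (0 : Pt (2*n)) R := fun t ht =>
    Metric.closedBall_subset_closedBall (le_max_right _ _)
      (hR2 (Set.mem_image_of_mem g (Set.Ico_subset_Icc_self ht)))
  obtain ⟨Kc, hKc⟩ := EtherProof.lipschitz_Phi E y hy R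
  set τf : ℝ → ℝ := fun t => max 0 (min t 1) with hτdef
  have hτ : ∀ t, τf t ∈ Set.Icc (0:ℝ) 1 := fun t =>
    ⟨le_max_left _ _, max_le zero_le_one (min_le_right t 1)⟩
  have hτeq : ∀ t ∈ Set.Ico (0:ℝ) 1, τf t = t := by
    intro t ht
    have h1 : min t 1 = t := min_eq_left (le_of_lt ht.2)
    rw [hτdef]
    simp only [h1]
    exact max_eq_right ht.1
  set v : ℝ → Pt (2*n) → Pt (2*n) := fun t => EtherProof.Phi E y (τf t) with hvdef
  have hv : ∀ t, LipschitzOnWith Kc (v t) (Metric.closedBall 0 R) := fun t =>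
    hKc (τf t) (hτ t)
  have hf' : ∀ t ∈ Set.Ico (0:ℝ) 1, HasDerivWithinAt f (v t (f t)) (Set.Ici t) t := by
    intro t ht
    have h := hfd t (Set.Ico_subset_Icc_self ht) (E.s (y 0) z)
    have hveq : v t (f t) = EtherProof.Phi E y t (f t) := by
      rw [hvdef]
      simp only [hτeq t ht]
    rw [hveq]
    exact h.hasDerivWithinAt
  have hg' : ∀ t ∈ Set.Ico (0:ℝ) 1, HasDerivWithinAt g (v t (g t)) (Set.Ici t) t := by
    intro t ht
    have h := hgd t (Set.Ico_subset_Icc_self ht)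
    have hveq : v t (g t) = EtherProof.Phi E y t (g t) := by
      rw [hvdef]
      simp only [hτeq t ht]
    rw [hveq]
    exact h.hasDerivWithinAt
  have h0 : f 0 = g 0 := by
    rw [hfdef, hgdef]
    simp only [hY0]
  have huniq := ODE_solution_unique_of_mem_Icc_right (fun t _ => hv t) hfc hf' hfin hgc hg' hgin h0
  exact huniq ⟨zero_le_one, le_refl 1⟩
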